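/- arXiv:2106.02028 — 5 statements merged into one kernel-verified Lean document; each statement's English description precedes it below -/
import Mathlib

section
/- Let V ∈ L¹(ℝ³) be real-valued with Fourier transform V̂ ≤ 0 everywhere, V̂(0) < 0, and suppose |·|^{-2} V ∈ L¹(ℝ³). Then ∫_{ℝ³} V(x)/|x|² dx < 0. -/
/-!
Since `‖x‖⁻² = ∫₀^∞ exp (-t ‖x‖²) dt`, Fubini gives
`∫ V x / ‖x‖² dx = ∫₀^∞ (∫ V x exp (-t ‖x‖²) dx) dt`, and it suffices that every inner integral is
negative. The Fourier transform is self-adjoint, `∫ 𝓕 g · V = ∫ g · 𝓕 V`, and the Fourier transform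
of a Gaussian is a positive multiple of a Gaussian; so each inner integral is a positive multiple
of `∫ exp (-(π² / t) ‖ξ‖²) V̂ ξ dξ`, which is negative because `V̂ ≤ 0` is continuous and
`V̂ 0 < 0`.
-/

open MeasureTheory Real Set
open scoped FourierTransform

section Laplace

variable {α : Type*} [MeasurableSpace α] {μ : Measure α}

theorem integral_neg_of_ae_neg [NeZero μ] {f : α → ℝ} (hfi : Integrable f μ)
    (hf : ∀ᵐ x ∂μ, f x < 0) : ∫ x, f x ∂μ < 0 := by
  rw [← neg_pos, ← integral_neg, integral_pos_iff_support_of_nonneg_ae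
    (hf.mono fun x hx => (neg_pos.2 hx).le) hfi.neg]
  refine pos_iff_ne_zero.2 fun h => ?_
  have hf0 : ∀ᵐ x ∂μ, -f x = 0 := ae_iff.2 h
  obtain ⟨x, hx, hx'⟩ := (hf0.and hf).exists
  linarith

theorem integral_exp_neg_mul_Ioi {a : ℝ} (ha : 0 < a) :
    ∫ t in Ioi 0, rexp (-t * a) = a⁻¹ := by
  calc ∫ t in Ioi 0, rexp (-t * a) = ∫ t in Ioi 0, rexp (-a * t) := by
        congr 1 with t; ring_nf
    _ = a⁻¹ := by rw [integral_exp_mul_Ioi (neg_lt_zero.2 ha)]; simp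

theorem integrable_prod_mul_exp_neg_mul {f φ : α → ℝ} (hf : AEStronglyMeasurable f μ)
    (hφ : Measurable φ) (hφ_pos : ∀ᵐ x ∂μ, 0 < φ x)
    (hfφ : Integrable (fun x => f x / φ x) μ) :
    Integrable (fun p : α × ℝ => f p.1 * rexp (-p.2 * φ p.1))
      (μ.prod (volume.restrict (Ioi 0))) := by
  have hmeas : AEStronglyMeasurable (fun p : α × ℝ => f p.1 * rexp (-p.2 * φ p.1))
      (μ.prod (volume.restrict (Ioi 0))) :=
    hf.comp_fst.mul (measurable_snd.neg.mul (hφ.comp measurable_fst)).exp.aestronglyMeasurable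
  refine (integrable_prod_iff hmeas).2 ⟨?_, ?_⟩
  · filter_upwards [hφ_pos] with x hx
    refine ((exp_neg_integrableOn_Ioi 0 hx).const_mul (f x)).congr (.of_forall fun t => ?_)
    simp only [neg_mul, mul_comm t]
  · refine hfφ.norm.congr ?_
    filter_upwards [hφ_pos] with x hx
    simp only [norm_mul, Real.norm_of_nonneg (exp_pos _).le]
    rw [integral_const_mul, integral_exp_neg_mul_Ioi hx, norm_div, Real.norm_of_nonneg hx.le,
      div_eq_mul_inv]

theorem integral_div_eq_integral_Ioi_integral_mul_exp_neg_mul [SFinite μ] {f φ : α → ℝ}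
    (hf : AEStronglyMeasurable f μ) (hφ : Measurable φ) (hφ_pos : ∀ᵐ x ∂μ, 0 < φ x)
    (hfφ : Integrable (fun x => f x / φ x) μ) :
    ∫ x, f x / φ x ∂μ = ∫ t in Ioi 0, ∫ x, f x * rexp (-t * φ x) ∂μ := by
  rw [← integral_integral_swap (integrable_prod_mul_exp_neg_mul hf hφ hφ_pos hfφ)]
  refine integral_congr_ae ?_
  filter_upwards [hφ_pos] with x hx
  rw [integral_const_mul, integral_exp_neg_mul_Ioi hx, div_eq_mul_inv]

end Laplace

section Fourier

variable {E : Type*} [NormedAddCommGroup E] [InnerProductSpace ℝ E] [FiniteDimensional ℝ E]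
  [MeasurableSpace E] [BorelSpace E]

theorem continuous_fourier_of_integrable {f : E → ℂ} (hf : Integrable f) : Continuous (𝓕 f) :=
  VectorFourier.fourierIntegral_continuous continuous_fourierChar continuous_inner hf

theorem norm_fourier_le_integral_norm (f : E → ℂ) (w : E) : ‖𝓕 f w‖ ≤ ∫ x, ‖f x‖ :=
  VectorFourier.norm_fourierIntegral_le_integral_norm _ _ _ _ _

theorem integral_fourier_mul_eq_integral_mul_fourier {f g : E → ℂ} (hf : Integrable f)
    (hg : Integrable g) : ∫ ξ, 𝓕 f ξ * g ξ = ∫ x, f x * 𝓕 g x := by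
  have hflip : (innerₗ E).flip = innerₗ E := LinearMap.ext₂ fun x y => real_inner_comm x y
  have := VectorFourier.integral_fourierIntegral_smul_eq_flip (L := innerₗ E)
    continuous_fourierChar continuous_inner hf hg
  rwa [hflip] at this

theorem integrable_exp_neg_mul_sq_norm {b : ℝ} (hb : 0 < b) :
    Integrable (fun x : E => rexp (-b * ‖x‖ ^ 2)) :=
  .of_integral_ne_zero (by rw [GaussianFourier.integral_rexp_neg_mul_sq_norm hb]; positivity)

theorem fourier_ofReal_exp_neg_mul_sq_norm {b : ℝ} (hb : 0 < b) (w : E) :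
    𝓕 (fun v : E => (rexp (-b * ‖v‖ ^ 2) : ℂ)) w =
      ((π / b) ^ (Module.finrank ℝ E / 2 : ℝ) * rexp (-(π ^ 2 / b) * ‖w‖ ^ 2) : ℝ) := by
  have hgauss : (fun v : E => (rexp (-b * ‖v‖ ^ 2) : ℂ)) =
      fun v => Complex.exp (-b * ‖v‖ ^ 2) := by
    ext v
    norm_cast
  rw [hgauss, fourier_gaussian_innerProductSpace (by simpa using hb), Complex.ofReal_mul,
    Complex.ofReal_cpow (by positivity)]
  push_cast
  ring_nf

theorem integral_exp_neg_mul_sq_norm_mul_re_fourier {f : E → ℝ} (hf : Integrable f) {b : ℝ}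
    (hb : 0 < b) :
    ∫ ξ, rexp (-b * ‖ξ‖ ^ 2) * (𝓕 (fun x => (f x : ℂ)) ξ).re =
      (π / b) ^ (Module.finrank ℝ E / 2 : ℝ) * ∫ x, f x * rexp (-(π ^ 2 / b) * ‖x‖ ^ 2) := by
  set g : E → ℂ := fun v => (rexp (-b * ‖v‖ ^ 2) : ℂ)
  have hg : Integrable g := (integrable_exp_neg_mul_sq_norm hb).ofReal
  have hint : Integrable fun ξ => g ξ * 𝓕 (fun x => (f x : ℂ)) ξ :=
    hg.mul_bdd (continuous_fourier_of_integrable hf.ofReal).aestronglyMeasurable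
      (.of_forall (norm_fourier_le_integral_norm _))
  calc ∫ ξ, rexp (-b * ‖ξ‖ ^ 2) * (𝓕 (fun x => (f x : ℂ)) ξ).re
      = (∫ ξ, g ξ * 𝓕 (fun x => (f x : ℂ)) ξ).re := by
        rw [← RCLike.re_to_complex, ← integral_re hint]
        simp only [g, RCLike.re_to_complex, Complex.re_ofReal_mul]
    _ = (∫ ξ, 𝓕 g ξ * f ξ).re :=
        congrArg Complex.re (integral_fourier_mul_eq_integral_mul_fourier hg hf.ofReal).symm
    _ = (π / b) ^ (Module.finrank ℝ E / 2 : ℝ) * ∫ x, f x * rexp (-(π ^ 2 / b) * ‖x‖ ^ 2) := by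
        simp only [g, fourier_ofReal_exp_neg_mul_sq_norm hb, ← Complex.ofReal_mul]
        rw [integral_complex_ofReal, Complex.ofReal_re, ← integral_const_mul]
        congr 1 with x
        ring

theorem integral_mul_exp_neg_mul_sq_norm_neg {f : E → ℝ} (hf : Integrable f)
    (hf_nonpos : ∀ ξ, (𝓕 (fun x => (f x : ℂ)) ξ).re ≤ 0) {ξ₀ : E}
    (hξ₀ : (𝓕 (fun x => (f x : ℂ)) ξ₀).re < 0) {s : ℝ} (hs : 0 < s) :
    ∫ x, f x * rexp (-s * ‖x‖ ^ 2) < 0 := by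
  set F : E → ℝ := fun ξ => (𝓕 (fun x => (f x : ℂ)) ξ).re
  have hF_cont : Continuous F :=
    Complex.continuous_re.comp (continuous_fourier_of_integrable hf.ofReal)
  have hF_bdd : ∀ ξ, ‖F ξ‖ ≤ ∫ x, ‖(f x : ℂ)‖ := fun ξ =>
    (Complex.abs_re_le_norm _).trans (norm_fourier_le_integral_norm _ ξ)
  -- The Gaussian of width `π ^ 2 / s` is the one whose Fourier transform has width `s`.
  have hb : 0 < π ^ 2 / s := by positivity
  have hint : Integrable (fun ξ => rexp (-(π ^ 2 / s) * ‖ξ‖ ^ 2) * F ξ) :=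
    (integrable_exp_neg_mul_sq_norm hb).mul_bdd hF_cont.aestronglyMeasurable (.of_forall hF_bdd)
  have hneg : ∫ ξ, rexp (-(π ^ 2 / s) * ‖ξ‖ ^ 2) * F ξ < 0 := by
    have := integral_pos_of_integrable_nonneg_nonzero (x := ξ₀) (by fun_prop) hint.neg
      (fun ξ => neg_nonneg.2 (mul_nonpos_of_nonneg_of_nonpos (exp_pos _).le (hf_nonpos ξ)))
      (neg_ne_zero.2 (mul_neg_of_pos_of_neg (exp_pos _) hξ₀).ne)
    simpa only [Pi.neg_apply, integral_neg, neg_pos] using this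
  rw [integral_exp_neg_mul_sq_norm_mul_re_fourier hf hb, div_div_cancel₀ (by positivity)] at hneg
  exact neg_of_mul_neg_right hneg (by positivity)

end Fourier

/-- Let `V ∈ L¹(ℝ³)` be real-valued with Fourier transform `V̂ ≤ 0` everywhere (i.e. `V̂` is
real with nonpositive real part), `V̂(0) < 0`, and suppose `|·|⁻² V ∈ L¹(ℝ³)`. Then
`∫ V(x)/|x|² dx < 0`. -/
theorem integral_V_div_normSq_neg (V : EuclideanSpace ℝ (Fin 3) → ℝ)
    (hV1 : Integrable V (volume : Measure (EuclideanSpace ℝ (Fin 3))))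
    (hV2 : Integrable (fun x : EuclideanSpace ℝ (Fin 3) => V x / ‖x‖ ^ 2)
      (volume : Measure (EuclideanSpace ℝ (Fin 3))))
    (hneg : ∀ p : EuclideanSpace ℝ (Fin 3),
      (𝓕 (fun x : EuclideanSpace ℝ (Fin 3) => (V x : ℂ)) p).im = 0 ∧
      (𝓕 (fun x : EuclideanSpace ℝ (Fin 3) => (V x : ℂ)) p).re ≤ 0)
    (h0 : (𝓕 (fun x : EuclideanSpace ℝ (Fin 3) => (V x : ℂ)) 0).re < 0) :
    (∫ x : EuclideanSpace ℝ (Fin 3), V x / ‖x‖ ^ 2) < 0 := by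
  have hnormSq_pos : ∀ᵐ x : EuclideanSpace ℝ (Fin 3), 0 < ‖x‖ ^ 2 :=
    (volume.ae_ne 0).mono fun x hx => pow_pos (norm_pos_iff.2 hx) 2
  have hnormSq_meas : Measurable fun x : EuclideanSpace ℝ (Fin 3) => ‖x‖ ^ 2 := by fun_prop
  have : NeZero (volume.restrict (Ioi (0 : ℝ))) := ⟨by simp [Measure.restrict_eq_zero]⟩
  rw [integral_div_eq_integral_Ioi_integral_mul_exp_neg_mul hV1.1 hnormSq_meas hnormSq_pos hV2]
  refine integral_neg_of_ae_neg
    (integrable_prod_mul_exp_neg_mul hV1.1 hnormSq_meas hnormSq_pos hV2).integral_prod_right ?_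
  filter_upwards [ae_restrict_mem measurableSet_Ioi] with t ht
  exact integral_mul_exp_neg_mul_sq_norm_neg hV1 (fun p => (hneg p).2) h0 ht
end

section
/- Let 0 < ε < 5/11 and let ℓ ∈ ℕ₀. For all p, μ, x, y > 0, |j_ℓ(px) j_ℓ(py) - j_ℓ(√μ x) j_ℓ(√μ y)| ≤ C |p - √μ|^ε (p^{-ε} + μ^{-ε/2}) (|j_ℓ(px)|^{1-11ε/5} + |j_ℓ(√μ x)|^{1-11ε/5}) (|j_ℓ(py)|^{1-11ε/5} + |j_ℓ(√μ y)|^{1-11ε/5}), where C depends only on ε. -/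
/-- The spherical Bessel function of the first kind `j_ℓ`, defined by
`j₀(x) = sin x / x`, `j₁(x) = sin x / x² - cos x / x` and the standard recurrence
`j_{ℓ+1}(x) = (2ℓ+1)/x · j_ℓ(x) - j_{ℓ-1}(x)`. -/
noncomputable def sphericalBessel : ℕ → ℝ → ℝ
  | 0, x => if x = 0 then 1 else Real.sin x / x
  | 1, x => if x = 0 then 0 else Real.sin x / x ^ 2 - Real.cos x / x
  | (n + 2), x => if x = 0 then 0 else
      (2 * (n : ℝ) + 3) / x * sphericalBessel (n + 1) x - sphericalBessel n x


/-!
Write `u_ℓ(x) = x j_ℓ(x)`. The recurrence gives `u_ℓ' = (ℓ+1)/x · u_ℓ - u_{ℓ+1}` and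
`u_ℓ'' = (ℓ(ℓ+1)/x² - 1) u_ℓ`, and the energy `E_ℓ = u_ℓ'² + (1 - ℓ(ℓ+1)/x²) u_ℓ²` satisfies
`E_0 = 1` and `E_{ℓ+1} = E_ℓ - (ℓ+1)(u_ℓ² + u_{ℓ+1}²)/x²`, so `E_ℓ ≤ 1`. Beyond the turning point
`x² = ℓ(ℓ+1)` this is `|u_ℓ'| ≤ 1`; before it `u_ℓ` is positive (it starts like
`x^{ℓ+1}/(2ℓ+1)‼`) and hence convex, so `0 ≤ u_ℓ' ≤ u_ℓ'(√(ℓ(ℓ+1))) ≤ 1`. Therefore `|u_ℓ(x)| ≤ x`,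
i.e. `|j_ℓ| ≤ 1`, and `|x j_ℓ'| = |u_ℓ' - j_ℓ| ≤ 2`, so `|j_ℓ(py) - j_ℓ(qy)| ≤ 2|p - q|/min(p, q)`.
Interpolating this with the trivial bound `|j_ℓ(py)| + |j_ℓ(qy)|` through
`min(w, R) ≤ w^α R^ε` (`α + ε ≤ 1`) and writing `ab - cd = a(b - d) + d(a - c)` gives the
estimate with `C = 4`.
-/

open Set
open scoped Nat Topology

lemma Nat.doubleFactorial_le_add_two_mul (n k : ℕ) : n‼ ≤ (n + 2 * k)‼ := by
  induction k with
  | zero => rfl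
  | succ k ih =>
    rw [show n + 2 * (k + 1) = n + 2 * k + 2 by ring, Nat.doubleFactorial_add_two]
    exact ih.trans (Nat.le_mul_of_pos_left _ (by omega))

lemma monotoneOn_Ioc_of_hasDerivAt_nonneg {f f' : ℝ → ℝ} {a b : ℝ}
    (hf : ∀ x ∈ Ioc a b, HasDerivAt f (f' x) x) (hf' : ∀ x ∈ Ioo a b, 0 ≤ f' x) :
    MonotoneOn f (Ioc a b) := by
  refine monotoneOn_of_hasDerivWithinAt_nonneg (f' := f') (convex_Ioc a b)
    (fun x hx => (hf x hx).continuousAt.continuousWithinAt) ?_ ?_ <;> rw [interior_Ioc]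
  · exact fun x hx => (hf x (Ioo_subset_Ioc_self hx)).hasDerivWithinAt
  · exact hf'

lemma min_le_rpow_mul_rpow {w R α ε : ℝ} (hw0 : 0 ≤ w) (hw1 : w ≤ 1) (hR : 0 ≤ R) (hα : 0 ≤ α)
    (hε : 0 ≤ ε) (hαε : α + ε ≤ 1) : min w R ≤ w ^ α * R ^ ε := by
  have hm : 0 ≤ min w R := le_min hw0 hR
  calc min w R = min w R ^ (1 - ε) * min w R ^ ε := by
        rw [← Real.rpow_add' hm (by norm_num), sub_add_cancel, Real.rpow_one]
    _ ≤ w ^ (1 - ε) * R ^ ε :=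
        mul_le_mul (Real.rpow_le_rpow hm (min_le_left _ _) (by linarith))
          (Real.rpow_le_rpow hm (min_le_right _ _) hε) (by positivity) (by positivity)
    _ ≤ w ^ α * R ^ ε := mul_le_mul_of_nonneg_right
        (Real.rpow_le_rpow_of_exponent_ge' hw0 hw1 hα (by linarith)) (by positivity)

lemma abs_sub_le_rpow_add_rpow_mul_rpow {a c R α ε : ℝ} (ha : |a| ≤ 1) (hc : |c| ≤ 1)
    (hR : |a - c| ≤ R) (hα : 0 ≤ α) (hε : 0 ≤ ε) (hαε : α + ε ≤ 1) :
    |a - c| ≤ (|a| ^ α + |c| ^ α) * R ^ ε := by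
  have hR0 : 0 ≤ R := (abs_nonneg _).trans hR
  calc |a - c| ≤ min |a| R + min |c| R := by
        rcases le_total |a| R with h | h <;> rcases le_total |c| R with h' | h' <;>
          simp only [min_eq_left, min_eq_right, h, h'] <;>
          linarith [abs_sub a c, abs_nonneg a, abs_nonneg c]
    _ ≤ |a| ^ α * R ^ ε + |c| ^ α * R ^ ε :=
        add_le_add (min_le_rpow_mul_rpow (abs_nonneg _) ha hR0 hα hε hαε)
          (min_le_rpow_mul_rpow (abs_nonneg _) hc hR0 hα hε hαε)
    _ = (|a| ^ α + |c| ^ α) * R ^ ε := by ring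

lemma abs_mul_sub_mul_le_of_abs_sub_le {a b c d α r : ℝ} (ha : |a| ≤ 1) (hd : |d| ≤ 1)
    (hα : α ≤ 1) (hac : |a - c| ≤ (|a| ^ α + |c| ^ α) * r)
    (hbd : |b - d| ≤ (|b| ^ α + |d| ^ α) * r) :
    |a * b - c * d| ≤ 2 * r * (|a| ^ α + |c| ^ α) * (|b| ^ α + |d| ^ α) := by
  have ha' : |a| ≤ |a| ^ α := Real.self_le_rpow_of_le_one (abs_nonneg a) ha hα
  have hd' : |d| ≤ |d| ^ α := Real.self_le_rpow_of_le_one (abs_nonneg d) hd hα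
  have hA : |a| ^ α ≤ |a| ^ α + |c| ^ α := le_add_of_nonneg_right (by positivity)
  have hD : |d| ^ α ≤ |b| ^ α + |d| ^ α := le_add_of_nonneg_left (by positivity)
  calc |a * b - c * d| = |a * (b - d) + d * (a - c)| := by congr 1; ring
    _ ≤ |a| * |b - d| + |d| * |a - c| := by
        rw [← abs_mul, ← abs_mul]; exact abs_add_le _ _
    _ ≤ (|a| ^ α + |c| ^ α) * ((|b| ^ α + |d| ^ α) * r) +
        (|b| ^ α + |d| ^ α) * ((|a| ^ α + |c| ^ α) * r) := by
        gcongr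
        · exact ha'.trans hA
        · exact hd'.trans hD
    _ = _ := by ring

lemma rpow_two_mul_div_min_le {p q ε : ℝ} (hp : 0 < p) (hq : 0 < q) (hε : ε ≤ 1) :
    (2 * |p - q| / min p q) ^ ε ≤ 2 * |p - q| ^ ε * (p ^ (-ε) + q ^ (-ε)) := by
  have hm : 0 < min p q := lt_min hp hq
  rw [div_eq_mul_inv, Real.mul_rpow (by positivity) (by positivity),
    Real.mul_rpow (by norm_num) (abs_nonneg _), Real.inv_rpow hm.le, ← Real.rpow_neg hm.le]
  have h2 : (2 : ℝ) ^ ε ≤ 2 := by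
    simpa using Real.rpow_le_rpow_of_exponent_le (by norm_num : (1 : ℝ) ≤ 2) hε
  have hmin : min p q ^ (-ε) ≤ p ^ (-ε) + q ^ (-ε) := by
    rcases min_choice p q with h | h <;> rw [h]
    · exact le_add_of_nonneg_right (by positivity)
    · exact le_add_of_nonneg_left (by positivity)
  gcongr

lemma sphericalBessel_zero_of_ne {x : ℝ} (hx : x ≠ 0) : sphericalBessel 0 x = Real.sin x / x := by
  simp [sphericalBessel, hx]

lemma sphericalBessel_one_of_ne {x : ℝ} (hx : x ≠ 0) :
    sphericalBessel 1 x = Real.sin x / x ^ 2 - Real.cos x / x := by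
  simp [sphericalBessel, hx]

lemma sphericalBessel_add_two (ℓ : ℕ) {x : ℝ} (hx : x ≠ 0) :
    sphericalBessel (ℓ + 2) x =
      (2 * ℓ + 3) / x * sphericalBessel (ℓ + 1) x - sphericalBessel ℓ x := by
  simp [sphericalBessel, hx]

noncomputable def sphericalBesselCoeff (ℓ k : ℕ) : ℝ :=
  (-1) ^ k / (2 ^ k * k ! * (2 * ℓ + 2 * k + 1)‼ : ℕ)

lemma sphericalBesselCoeff_zero_right (ℓ : ℕ) : sphericalBesselCoeff ℓ 0 = 1 / (2 * ℓ + 1)‼ := by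
  simp [sphericalBesselCoeff]

lemma sphericalBesselCoeff_zero_right_pos (ℓ : ℕ) : 0 < sphericalBesselCoeff ℓ 0 := by
  rw [sphericalBesselCoeff_zero_right]
  exact one_div_pos.mpr (by exact_mod_cast Nat.doubleFactorial_pos _)

lemma sphericalBesselCoeff_zero_right_le_one (ℓ : ℕ) : sphericalBesselCoeff ℓ 0 ≤ 1 := by
  rw [sphericalBesselCoeff_zero_right]
  exact div_le_one_of_le₀ (by exact_mod_cast Nat.doubleFactorial_pos _) (by positivity)

lemma abs_sphericalBesselCoeff_le (ℓ k : ℕ) :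
    |sphericalBesselCoeff ℓ k| ≤ sphericalBesselCoeff ℓ 0 / (2 ^ k * k !) := by
  have hle : ((2 ^ k * k ! * (2 * ℓ + 1)‼ : ℕ) : ℝ) ≤ (2 ^ k * k ! * (2 * ℓ + 2 * k + 1)‼ : ℕ) := by
    have h := Nat.doubleFactorial_le_add_two_mul (2 * ℓ + 1) k
    rw [show 2 * ℓ + 1 + 2 * k = 2 * ℓ + 2 * k + 1 by ring] at h
    exact_mod_cast Nat.mul_le_mul_left _ h
  have hpos : (0 : ℝ) < (2 ^ k * k ! * (2 * ℓ + 1)‼ : ℕ) := by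
    exact_mod_cast Nat.mul_pos (Nat.mul_pos (by positivity) k.factorial_pos)
      (Nat.doubleFactorial_pos _)
  rw [sphericalBesselCoeff, sphericalBesselCoeff_zero_right, abs_div, abs_pow, abs_neg, abs_one,
    one_pow, Nat.abs_cast, div_div]
  calc 1 / ((2 ^ k * k ! * (2 * ℓ + 2 * k + 1)‼ : ℕ) : ℝ)
      ≤ 1 / ((2 ^ k * k ! * (2 * ℓ + 1)‼ : ℕ) : ℝ) := one_div_le_one_div_of_le hpos hle
    _ = 1 / ((2 * ℓ + 1)‼ * (2 ^ k * k !)) := by push_cast; ring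

lemma sphericalBesselCoeff_zero_left (k : ℕ) :
    sphericalBesselCoeff 0 k = (-1) ^ k / (2 * k + 1)! := by
  rw [sphericalBesselCoeff, mul_zero, zero_add, Nat.factorial_eq_mul_doubleFactorial,
    Nat.doubleFactorial_two_mul, mul_comm]

lemma sphericalBesselCoeff_one_left (k : ℕ) :
    sphericalBesselCoeff 1 k = (-1) ^ k * (1 / (2 * k + 2)! - 1 / (2 * k + 3)!) := by
  have h3 : (2 * k + 3)! = (2 * k + 3) * (2 * k + 2)! := Nat.factorial_succ _
  have h2 : (2 * k + 3)! = (2 * k + 3)‼ * (2 ^ (k + 1) * (k + 1)!) := by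
    rw [← Nat.doubleFactorial_two_mul, show 2 * (k + 1) = 2 * k + 2 by ring,
      ← Nat.factorial_eq_mul_doubleFactorial]
  have key : (2 : ℝ) ^ k * k ! * (2 * k + 3)‼ * (2 * k + 2) = (2 * k + 3) * (2 * k + 2)! := by
    have : 2 ^ k * k ! * (2 * k + 3)‼ * (2 * k + 2) = (2 * k + 3) * (2 * k + 2)! := by
      rw [← h3, h2, Nat.factorial_succ k, pow_succ]; ring
    exact_mod_cast this
  rw [sphericalBesselCoeff, show 2 * 1 + 2 * k + 1 = 2 * k + 3 by ring, h3]
  have hd : ((2 * k + 3)‼ : ℝ) ≠ 0 := by exact_mod_cast (Nat.doubleFactorial_pos _).ne'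
  have hf : ((2 * k + 2)! : ℝ) ≠ 0 := by positivity
  push_cast
  field_simp
  linear_combination -key

lemma sphericalBesselCoeff_succ_zero_right (ℓ : ℕ) :
    (2 * ℓ + 3) * sphericalBesselCoeff (ℓ + 1) 0 = sphericalBesselCoeff ℓ 0 := by
  rw [sphericalBesselCoeff_zero_right, sphericalBesselCoeff_zero_right,
    show 2 * (ℓ + 1) + 1 = 2 * ℓ + 1 + 2 by ring, Nat.doubleFactorial_add_two]
  have hd : ((2 * ℓ + 1)‼ : ℝ) ≠ 0 := by exact_mod_cast (Nat.doubleFactorial_pos _).ne'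
  push_cast
  field_simp
  ring

lemma sphericalBesselCoeff_add_two (ℓ k : ℕ) :
    (2 * ℓ + 3) * sphericalBesselCoeff (ℓ + 1) (k + 1) - sphericalBesselCoeff ℓ (k + 1) =
      sphericalBesselCoeff (ℓ + 2) k := by
  simp only [sphericalBesselCoeff]
  rw [show 2 * (ℓ + 1) + 2 * (k + 1) + 1 = 2 * ℓ + 2 * k + 3 + 2 by ring,
    show 2 * ℓ + 2 * (k + 1) + 1 = 2 * ℓ + 2 * k + 3 by ring,
    show 2 * (ℓ + 2) + 2 * k + 1 = 2 * ℓ + 2 * k + 3 + 2 by ring,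
    Nat.doubleFactorial_add_two, Nat.factorial_succ]
  have hd : ((2 * ℓ + 2 * k + 3)‼ : ℝ) ≠ 0 := by exact_mod_cast (Nat.doubleFactorial_pos _).ne'
  push_cast
  field_simp
  ring

lemma hasSum_sphericalBessel : ∀ (ℓ : ℕ) {x : ℝ}, x ≠ 0 →
    HasSum (fun k => sphericalBesselCoeff ℓ k * x ^ (2 * k + ℓ)) (sphericalBessel ℓ x)
  | 0, x, hx => by
    rw [sphericalBessel_zero_of_ne hx]
    refine ((Real.hasSum_sin x).div_const x).congr_fun fun k => ?_
    rw [sphericalBesselCoeff_zero_left, add_zero, pow_succ]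
    field_simp
  | 1, x, hx => by
    have hs := ((Real.hasSum_sin x).div_const (x ^ 2)).sub ((Real.hasSum_cos x).div_const x)
    have hs0 : (-1 : ℝ) ^ 0 * x ^ (2 * 0 + 1) / (2 * 0 + 1)! / x ^ 2 -
        (-1) ^ 0 * x ^ (2 * 0) / (2 * 0)! / x = 0 := by
      simp only [pow_zero, mul_zero, zero_add, pow_one, Nat.factorial, Nat.cast_one]
      field_simp
      ring
    rw [← hasSum_nat_add_iff' 1, Finset.sum_range_one, hs0, sub_zero] at hs
    rw [sphericalBessel_one_of_ne hx]
    refine hs.congr_fun fun k => ?_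
    rw [sphericalBesselCoeff_one_left, show 2 * (k + 1) + 1 = 2 * k + 1 + 2 by ring,
      show 2 * (k + 1) = 2 * k + 2 by ring, pow_add, pow_succ (-1 : ℝ) k,
      show 2 * k + 1 + 2 = 2 * k + 3 by ring]
    field_simp
    ring
  | ℓ + 2, x, hx => by
    have hs := ((hasSum_sphericalBessel (ℓ + 1) hx).mul_left ((2 * ℓ + 3) / x)).sub
      (hasSum_sphericalBessel ℓ hx)
    have hs0 : (2 * ℓ + 3) / x * (sphericalBesselCoeff (ℓ + 1) 0 * x ^ (2 * 0 + (ℓ + 1))) -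
        sphericalBesselCoeff ℓ 0 * x ^ (2 * 0 + ℓ) = 0 := by
      rw [← sphericalBesselCoeff_succ_zero_right ℓ, mul_zero, zero_add, zero_add, pow_succ]
      field_simp
      ring
    rw [← hasSum_nat_add_iff' 1, Finset.sum_range_one, hs0, sub_zero] at hs
    rw [sphericalBessel_add_two ℓ hx]
    refine hs.congr_fun fun k => ?_
    rw [← sphericalBesselCoeff_add_two, show 2 * (k + 1) + (ℓ + 1) = 2 * k + (ℓ + 2) + 1 by ring,
      show 2 * (k + 1) + ℓ = 2 * k + (ℓ + 2) by ring, pow_succ]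
    field_simp

lemma abs_sphericalBessel_sub_leading_le (ℓ : ℕ) {x : ℝ} (hx : x ≠ 0) (hx1 : |x| ≤ 1) :
    |sphericalBessel ℓ x - sphericalBesselCoeff ℓ 0 * x ^ ℓ| ≤
      sphericalBesselCoeff ℓ 0 * |x| ^ (ℓ + 2) := by
  have hs := hasSum_sphericalBessel ℓ hx
  rw [← hasSum_nat_add_iff' 1, Finset.sum_range_one, mul_zero, zero_add] at hs
  refine hs.norm_le_of_bounded (hasSum_geometric_two' _) fun k => ?_
  have hc := abs_sphericalBesselCoeff_le ℓ (k + 1)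
  have hfac : (1 : ℝ) ≤ (k + 1)! := by exact_mod_cast Nat.one_le_iff_ne_zero.mpr (by positivity)
  have hxk : |x| ^ (2 * (k + 1) + ℓ) ≤ |x| ^ (ℓ + 2) :=
    pow_le_pow_of_le_one (abs_nonneg x) hx1 (by omega)
  have hc0 := sphericalBesselCoeff_zero_right_pos ℓ
  calc ‖sphericalBesselCoeff ℓ (k + 1) * x ^ (2 * (k + 1) + ℓ)‖
      = |sphericalBesselCoeff ℓ (k + 1)| * |x| ^ (2 * (k + 1) + ℓ) := by
        rw [Real.norm_eq_abs, abs_mul, abs_pow]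
    _ ≤ sphericalBesselCoeff ℓ 0 / 2 ^ (k + 1) * |x| ^ (ℓ + 2) := by
        gcongr
        refine hc.trans (div_le_div_of_nonneg_left hc0.le (by positivity) ?_)
        exact le_mul_of_one_le_right (by positivity) hfac
    _ = sphericalBesselCoeff ℓ 0 * |x| ^ (ℓ + 2) / 2 / 2 ^ k := by ring

lemma sphericalBessel_pos_of_lt_one (ℓ : ℕ) {x : ℝ} (hx0 : 0 < x) (hx1 : x < 1) :
    0 < sphericalBessel ℓ x := by
  have h := abs_sphericalBessel_sub_leading_le ℓ hx0.ne' (by rw [abs_of_pos hx0]; exact hx1.le)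
  rw [abs_of_pos hx0, abs_le] at h
  have hlt : x ^ (ℓ + 2) < x ^ ℓ := pow_lt_pow_right_of_lt_one₀ hx0 hx1 (by omega)
  nlinarith [sphericalBesselCoeff_zero_right_pos ℓ]

lemma abs_sphericalBessel_le_two_of_abs_le_one (ℓ : ℕ) {x : ℝ} (hx : x ≠ 0) (hx1 : |x| ≤ 1) :
    |sphericalBessel ℓ x| ≤ 2 := by
  have h := abs_sphericalBessel_sub_leading_le ℓ hx hx1
  have hc0 := sphericalBesselCoeff_zero_right_le_one ℓ
  have hc0' := sphericalBesselCoeff_zero_right_pos ℓ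
  have h1 : |x| ^ ℓ ≤ 1 := pow_le_one₀ (abs_nonneg x) hx1
  have h2 : |x| ^ (ℓ + 2) ≤ 1 := pow_le_one₀ (abs_nonneg x) hx1
  calc |sphericalBessel ℓ x|
      ≤ |sphericalBessel ℓ x - sphericalBesselCoeff ℓ 0 * x ^ ℓ| +
          |sphericalBesselCoeff ℓ 0 * x ^ ℓ| := by
        simpa using abs_add_le (sphericalBessel ℓ x - sphericalBesselCoeff ℓ 0 * x ^ ℓ)
          (sphericalBesselCoeff ℓ 0 * x ^ ℓ)
    _ ≤ sphericalBesselCoeff ℓ 0 * 1 + sphericalBesselCoeff ℓ 0 * 1 := by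
        rw [abs_mul, abs_of_pos hc0', abs_pow]
        gcongr
        exact h.trans (by gcongr)
    _ ≤ 2 := by linarith

noncomputable def riccatiBessel (ℓ : ℕ) (x : ℝ) : ℝ := x * sphericalBessel ℓ x

noncomputable def riccatiBesselDeriv (ℓ : ℕ) (x : ℝ) : ℝ :=
  (ℓ + 1) / x * riccatiBessel ℓ x - riccatiBessel (ℓ + 1) x

lemma riccatiBessel_zero_of_ne {x : ℝ} (hx : x ≠ 0) : riccatiBessel 0 x = Real.sin x := by
  rw [riccatiBessel, sphericalBessel_zero_of_ne hx]
  field_simp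

lemma riccatiBessel_one_of_ne {x : ℝ} (hx : x ≠ 0) :
    riccatiBessel 1 x = Real.sin x / x - Real.cos x := by
  rw [riccatiBessel, sphericalBessel_one_of_ne hx]
  field_simp

lemma riccatiBessel_add_two (ℓ : ℕ) {x : ℝ} (hx : x ≠ 0) :
    riccatiBessel (ℓ + 2) x = (2 * ℓ + 3) / x * riccatiBessel (ℓ + 1) x - riccatiBessel ℓ x := by
  simp only [riccatiBessel, sphericalBessel_add_two ℓ hx]
  field_simp

lemma riccatiBesselDeriv_succ (ℓ : ℕ) {x : ℝ} (hx : x ≠ 0) :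
    riccatiBesselDeriv (ℓ + 1) x = riccatiBessel ℓ x - (ℓ + 1) / x * riccatiBessel (ℓ + 1) x := by
  rw [riccatiBesselDeriv, riccatiBessel_add_two ℓ hx]
  push_cast
  field_simp
  ring

lemma hasDerivAt_riccatiBessel : ∀ (ℓ : ℕ) {x : ℝ}, x ≠ 0 →
    HasDerivAt (riccatiBessel ℓ) (riccatiBesselDeriv ℓ x) x
  | 0, x, hx => by
    have h := (Real.hasDerivAt_sin x).congr_of_eventuallyEq
      ((eventually_ne_nhds hx).mono fun y hy => riccatiBessel_zero_of_ne hy)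
    refine h.congr_deriv ?_
    rw [riccatiBesselDeriv, riccatiBessel_zero_of_ne hx, riccatiBessel_one_of_ne hx]
    field_simp
    ring
  | 1, x, hx => by
    have h := (((Real.hasDerivAt_sin x).div (hasDerivAt_id x) hx).sub
      (Real.hasDerivAt_cos x)).congr_of_eventuallyEq
      ((eventually_ne_nhds hx).mono fun y hy => riccatiBessel_one_of_ne hy)
    refine h.congr_deriv ?_
    rw [riccatiBesselDeriv_succ 0 hx, riccatiBessel_zero_of_ne hx, riccatiBessel_one_of_ne hx]
    simp only [id]
    field_simp
    ring
  | ℓ + 2, x, hx => by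
    have hrec : riccatiBessel (ℓ + 2) =ᶠ[𝓝 x]
        fun y => (2 * ℓ + 3) * y⁻¹ * riccatiBessel (ℓ + 1) y - riccatiBessel ℓ y :=
      (eventually_ne_nhds hx).mono fun y hy => by rw [riccatiBessel_add_two ℓ hy, div_eq_mul_inv]
    refine (((((hasDerivAt_inv hx).const_mul _).mul (hasDerivAt_riccatiBessel (ℓ + 1) hx)).sub
      (hasDerivAt_riccatiBessel ℓ hx)).congr_of_eventuallyEq hrec).congr_deriv ?_
    rw [riccatiBesselDeriv_succ (ℓ + 1) hx, riccatiBesselDeriv_succ ℓ hx, riccatiBesselDeriv,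
      riccatiBessel_add_two ℓ hx]
    push_cast
    field_simp
    ring

lemma hasDerivAt_riccatiBesselDeriv (ℓ : ℕ) {x : ℝ} (hx : x ≠ 0) :
    HasDerivAt (riccatiBesselDeriv ℓ) ((ℓ * (ℓ + 1) / x ^ 2 - 1) * riccatiBessel ℓ x) x := by
  have h := (((hasDerivAt_inv hx).const_mul (ℓ + 1 : ℝ)).mul
    (hasDerivAt_riccatiBessel ℓ hx)).sub (hasDerivAt_riccatiBessel (ℓ + 1) hx)
  simp only [← div_eq_mul_inv] at h
  refine h.congr_deriv ?_
  rw [riccatiBesselDeriv_succ ℓ hx, riccatiBesselDeriv]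
  field_simp
  ring

noncomputable def riccatiBesselEnergy (ℓ : ℕ) (x : ℝ) : ℝ :=
  riccatiBesselDeriv ℓ x ^ 2 + (1 - ℓ * (ℓ + 1) / x ^ 2) * riccatiBessel ℓ x ^ 2

lemma riccatiBesselEnergy_zero {x : ℝ} (hx : x ≠ 0) : riccatiBesselEnergy 0 x = 1 := by
  rw [riccatiBesselEnergy, riccatiBesselDeriv, riccatiBessel_zero_of_ne hx,
    riccatiBessel_one_of_ne hx]
  field_simp
  linear_combination x ^ 2 * Real.sin_sq_add_cos_sq x

lemma riccatiBesselEnergy_succ (ℓ : ℕ) {x : ℝ} (hx : x ≠ 0) :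
    riccatiBesselEnergy (ℓ + 1) x = riccatiBesselEnergy ℓ x -
      (ℓ + 1) / x ^ 2 * (riccatiBessel ℓ x ^ 2 + riccatiBessel (ℓ + 1) x ^ 2) := by
  rw [riccatiBesselEnergy, riccatiBesselEnergy, riccatiBesselDeriv_succ ℓ hx, riccatiBesselDeriv]
  push_cast
  field_simp
  ring

lemma riccatiBesselEnergy_le_one (ℓ : ℕ) {x : ℝ} (hx : x ≠ 0) : riccatiBesselEnergy ℓ x ≤ 1 := by
  induction ℓ with
  | zero => exact (riccatiBesselEnergy_zero hx).le
  | succ ℓ ih =>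
    rw [riccatiBesselEnergy_succ ℓ hx]
    have : 0 ≤ (ℓ + 1) / x ^ 2 * (riccatiBessel ℓ x ^ 2 + riccatiBessel (ℓ + 1) x ^ 2) := by
      positivity
    linarith

lemma abs_riccatiBesselDeriv_le_one_of_le_sq (ℓ : ℕ) {x : ℝ} (hx : x ≠ 0)
    (hℓx : ℓ * (ℓ + 1) ≤ x ^ 2) : |riccatiBesselDeriv ℓ x| ≤ 1 := by
  have hE := riccatiBesselEnergy_le_one ℓ hx
  have hV : 0 ≤ 1 - ℓ * (ℓ + 1) / x ^ 2 := sub_nonneg.mpr ((div_le_one (by positivity)).mpr hℓx)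
  rw [riccatiBesselEnergy] at hE
  exact abs_le_one_iff_mul_self_le_one.mpr
    (by nlinarith [mul_nonneg hV (sq_nonneg (riccatiBessel ℓ x))])

lemma abs_riccatiBessel_le_two_mul (ℓ : ℕ) {x : ℝ} (hx0 : 0 < x) (hx1 : x ≤ 1) :
    |riccatiBessel ℓ x| ≤ 2 * x := by
  rw [riccatiBessel, abs_mul, abs_of_pos hx0, mul_comm]
  exact mul_le_mul_of_nonneg_right
    (abs_sphericalBessel_le_two_of_abs_le_one ℓ hx0.ne' (by rwa [abs_of_pos hx0])) hx0.le

lemma riccatiBessel_pos_of_lt_one (ℓ : ℕ) {x : ℝ} (hx0 : 0 < x) (hx1 : x < 1) :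
    0 < riccatiBessel ℓ x :=
  mul_pos hx0 (sphericalBessel_pos_of_lt_one ℓ hx0 hx1)

lemma riccatiBesselDeriv_monotoneOn (ℓ : ℕ) {T : ℝ} (hT : T ^ 2 ≤ ℓ * (ℓ + 1))
    (hu : ∀ x ∈ Ioo 0 T, 0 ≤ riccatiBessel ℓ x) :
    MonotoneOn (riccatiBesselDeriv ℓ) (Ioc 0 T) := by
  refine monotoneOn_Ioc_of_hasDerivAt_nonneg
    (fun x hx => hasDerivAt_riccatiBesselDeriv ℓ hx.1.ne') fun x hx => ?_
  have hxT : x ^ 2 ≤ ℓ * (ℓ + 1) := (pow_le_pow_left₀ hx.1.le hx.2.le 2).trans hT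
  have hq : 0 ≤ ℓ * (ℓ + 1) / x ^ 2 - 1 :=
    sub_nonneg.mpr ((one_le_div (pow_pos hx.1 2)).mpr hxT)
  exact mul_nonneg hq (hu x hx)

/-- If `u'(x) < 0`, monotonicity gives `u' < 0` on `(0, x]`, so `u(s) ≥ u(x) > 0` for all small
`s`, against `u(s) ≤ 2s`. -/
lemma riccatiBesselDeriv_nonneg (ℓ : ℕ) {T : ℝ} (hT : T ^ 2 ≤ ℓ * (ℓ + 1))
    (hu : ∀ x ∈ Ioo 0 T, 0 < riccatiBessel ℓ x) {x : ℝ} (hx : x ∈ Ioo 0 T) :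
    0 ≤ riccatiBesselDeriv ℓ x := by
  by_contra! hneg
  have hxT : x ^ 2 ≤ ℓ * (ℓ + 1) := (pow_le_pow_left₀ hx.1.le hx.2.le 2).trans hT
  have hmono := riccatiBesselDeriv_monotoneOn ℓ hxT
    fun t ht => (hu t ⟨ht.1, ht.2.trans hx.2⟩).le
  have hanti : MonotoneOn (fun t => -riccatiBessel ℓ t) (Ioc 0 x) :=
    monotoneOn_Ioc_of_hasDerivAt_nonneg (fun t ht => (hasDerivAt_riccatiBessel ℓ ht.1.ne').neg)
      fun t ht => by
        linarith [hmono ⟨ht.1, ht.2.le⟩ (right_mem_Ioc.mpr hx.1) ht.2.le]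
  have hux := hu x hx
  set s := min x (min 1 (riccatiBessel ℓ x / 4))
  have hs0 : 0 < s := lt_min hx.1 (lt_min one_pos (by linarith))
  have hsx : s ≤ x := min_le_left _ _
  have hs1 : s ≤ 1 := (min_le_right _ _).trans (min_le_left _ _)
  have hs4 : s ≤ riccatiBessel ℓ x / 4 := (min_le_right _ _).trans (min_le_right _ _)
  have hle : riccatiBessel ℓ x ≤ riccatiBessel ℓ s :=
    neg_le_neg_iff.mp (hanti ⟨hs0, hsx⟩ (right_mem_Ioc.mpr hx.1) hsx)
  linarith [le_abs_self (riccatiBessel ℓ s), abs_riccatiBessel_le_two_mul ℓ hs0 hs1]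

lemma riccatiBessel_pos_of_sq_le (ℓ : ℕ) {x : ℝ} (hx : 0 < x) (hxℓ : x ^ 2 ≤ ℓ * (ℓ + 1)) :
    0 < riccatiBessel ℓ x := by
  by_contra! hux
  have hx1 : 1 ≤ x := by
    by_contra! h
    exact (riccatiBessel_pos_of_lt_one ℓ hx h).not_ge hux
  have hcont : ContinuousOn (riccatiBessel ℓ) (Icc (1 / 2) x) := fun t ht =>
    (hasDerivAt_riccatiBessel ℓ (by linarith [ht.1] : (0 : ℝ) < t).ne').continuousAt
      |>.continuousWithinAt
  set S := Icc (1 / 2 : ℝ) x ∩ riccatiBessel ℓ ⁻¹' Iic 0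
  have hS : IsCompact S :=
    isCompact_Icc.of_isClosed_subset (hcont.preimage_isClosed_of_isClosed isClosed_Icc isClosed_Iic)
      inter_subset_left
  -- `z` is the first point of `[1/2, x]` where `u ≤ 0`
  obtain ⟨z, hzS, hzmin⟩ := hS.exists_isMinOn ⟨x, ⟨by linarith, le_rfl⟩, hux⟩ continuousOn_id
  have hz0 : 0 < z := by linarith [hzS.1.1]
  have hupos : ∀ t ∈ Ioo 0 z, 0 < riccatiBessel ℓ t := by
    intro t ht
    rcases lt_or_ge t 1 with h | h
    · exact riccatiBessel_pos_of_lt_one ℓ ht.1 h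
    · by_contra! hut
      exact ht.2.not_ge (hzmin ⟨⟨by linarith, by linarith [hzS.1.2, ht.2]⟩, hut⟩)
  have hzℓ : z ^ 2 ≤ ℓ * (ℓ + 1) := (pow_le_pow_left₀ hz0.le hzS.1.2 2).trans hxℓ
  have hmono : MonotoneOn (riccatiBessel ℓ) (Ioc 0 z) :=
    monotoneOn_Ioc_of_hasDerivAt_nonneg (fun t ht => hasDerivAt_riccatiBessel ℓ ht.1.ne')
      fun t ht => riccatiBesselDeriv_nonneg ℓ hzℓ hupos ht
  have hhalf : riccatiBessel ℓ (1 / 2) ≤ riccatiBessel ℓ z :=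
    hmono ⟨by norm_num, hzS.1.1⟩ (right_mem_Ioc.mpr hz0) hzS.1.1
  have huz : riccatiBessel ℓ z ≤ 0 := hzS.2
  linarith [riccatiBessel_pos_of_lt_one ℓ (by norm_num : (0 : ℝ) < 1 / 2) (by norm_num)]

lemma abs_riccatiBesselDeriv_le_one (ℓ : ℕ) {x : ℝ} (hx : 0 < x) :
    |riccatiBesselDeriv ℓ x| ≤ 1 := by
  rcases le_or_gt (ℓ * (ℓ + 1) : ℝ) (x ^ 2) with hge | hlt
  · exact abs_riccatiBesselDeriv_le_one_of_le_sq ℓ hx.ne' hge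
  set T := Real.sqrt (ℓ * (ℓ + 1))
  have hT : T ^ 2 = ℓ * (ℓ + 1) := Real.sq_sqrt (by positivity)
  have hxT : x < T := Real.lt_sqrt_of_sq_lt hlt
  have hupos : ∀ t ∈ Ioo 0 T, 0 < riccatiBessel ℓ t := fun t ht =>
    riccatiBessel_pos_of_sq_le ℓ ht.1 (hT ▸ pow_le_pow_left₀ ht.1.le ht.2.le 2)
  have hv0 := riccatiBesselDeriv_nonneg ℓ hT.le hupos ⟨hx, hxT⟩
  have hvT := riccatiBesselDeriv_monotoneOn ℓ hT.le (fun t ht => (hupos t ht).le)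
    ⟨hx, hxT.le⟩ (right_mem_Ioc.mpr (hx.trans hxT)) hxT.le
  have h1 := abs_le.mp (abs_riccatiBesselDeriv_le_one_of_le_sq ℓ (hx.trans hxT).ne' hT.ge)
  exact abs_le.mpr ⟨by linarith, by linarith⟩

lemma abs_riccatiBessel_le (ℓ : ℕ) {x : ℝ} (hx : 0 < x) : |riccatiBessel ℓ x| ≤ x := by
  refine le_of_forall_pos_le_add fun δ hδ => ?_
  set s := min x (min 1 δ)
  have hs0 : 0 < s := lt_min hx (lt_min one_pos hδ)
  have hsx : s ≤ x := min_le_left _ _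
  have hs1 : s ≤ 1 := (min_le_right _ _).trans (min_le_left _ _)
  have hsδ : s ≤ δ := (min_le_right _ _).trans (min_le_right _ _)
  have hmvt := norm_image_sub_le_of_norm_deriv_le_segment' (C := 1)
    (fun t ht => (hasDerivAt_riccatiBessel ℓ (hs0.trans_le ht.1).ne').hasDerivWithinAt)
    (fun t ht => abs_riccatiBesselDeriv_le_one ℓ (hs0.trans_le ht.1)) x ⟨hsx, le_rfl⟩
  rw [Real.norm_eq_abs] at hmvt
  have hus := abs_riccatiBessel_le_two_mul ℓ hs0 hs1
  have htri := abs_sub_abs_le_abs_sub (riccatiBessel ℓ x) (riccatiBessel ℓ s)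
  linarith

lemma abs_sphericalBessel_le_one (ℓ : ℕ) {x : ℝ} (hx : 0 < x) : |sphericalBessel ℓ x| ≤ 1 := by
  have h := abs_riccatiBessel_le ℓ hx
  rw [riccatiBessel, abs_mul, abs_of_pos hx] at h
  exact le_of_mul_le_mul_left (by linarith) hx

lemma hasDerivAt_sphericalBessel (ℓ : ℕ) {x : ℝ} (hx : x ≠ 0) :
    HasDerivAt (sphericalBessel ℓ) ((riccatiBesselDeriv ℓ x - sphericalBessel ℓ x) / x) x := by
  have hj : sphericalBessel ℓ =ᶠ[𝓝 x] fun y => riccatiBessel ℓ y / y :=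
    (eventually_ne_nhds hx).mono fun y hy => by simp only [riccatiBessel]; field_simp
  refine (((hasDerivAt_riccatiBessel ℓ hx).div (hasDerivAt_id x) hx).congr_of_eventuallyEq
    hj).congr_deriv ?_
  rw [riccatiBessel, id]
  field_simp

lemma abs_sphericalBessel_sub_le_div (ℓ : ℕ) {s t : ℝ} (hs : 0 < s) (hst : s ≤ t) :
    |sphericalBessel ℓ t - sphericalBessel ℓ s| ≤ 2 * (t - s) / s := by
  have hmvt := norm_image_sub_le_of_norm_deriv_le_segment' (C := 2 / s)
    (fun r hr => (hasDerivAt_sphericalBessel ℓ (hs.trans_le hr.1).ne').hasDerivWithinAt)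
    (fun r hr => by
      have hr0 : 0 < r := hs.trans_le hr.1
      rw [Real.norm_eq_abs, abs_div, abs_of_pos hr0, div_le_iff₀ hr0]
      calc |riccatiBesselDeriv ℓ r - sphericalBessel ℓ r|
          ≤ |riccatiBesselDeriv ℓ r| + |sphericalBessel ℓ r| := abs_sub _ _
        _ ≤ 2 := by
          linarith [abs_riccatiBesselDeriv_le_one ℓ hr0, abs_sphericalBessel_le_one ℓ hr0]
        _ ≤ 2 / s * r := by rw [div_mul_eq_mul_div, le_div_iff₀ hs]; linarith [hr.1])
    t ⟨hst, le_rfl⟩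
  rw [Real.norm_eq_abs] at hmvt
  linarith [show 2 / s * (t - s) = 2 * (t - s) / s by ring]

lemma abs_sphericalBessel_mul_sub_le (ℓ : ℕ) {p q y : ℝ} (hp : 0 < p) (hq : 0 < q) (hy : 0 < y) :
    |sphericalBessel ℓ (p * y) - sphericalBessel ℓ (q * y)| ≤ 2 * |p - q| / min p q := by
  wlog hpq : p ≤ q generalizing p q
  · rw [abs_sub_comm, abs_sub_comm p, min_comm]
    exact this hq hp (le_of_not_ge hpq)
  rw [abs_sub_comm, min_eq_left hpq, abs_of_nonpos (sub_nonpos.mpr hpq)]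
  refine (abs_sphericalBessel_sub_le_div ℓ (mul_pos hp hy)
    (mul_le_mul_of_nonneg_right hpq hy.le)).trans_eq ?_
  field_simp
  ring

/-- For `0 < ε < 5/11` there is `C = C(ε) > 0` such that for all `ℓ ∈ ℕ₀` and `p, μ, x, y > 0`,
`|j_ℓ(px)j_ℓ(py) - j_ℓ(√μ x)j_ℓ(√μ y)| ≤ C |p-√μ|^ε (p^{-ε} + μ^{-ε/2})
  (|j_ℓ(px)|^{1-11ε/5} + |j_ℓ(√μ x)|^{1-11ε/5})(|j_ℓ(py)|^{1-11ε/5} + |j_ℓ(√μ y)|^{1-11ε/5})`. -/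
theorem sphericalBessel_product_difference_bound (ε : ℝ) (hε0 : 0 < ε) (hε1 : ε < 5 / 11) :
    ∃ C > (0 : ℝ), ∀ (ℓ : ℕ) (p μ x y : ℝ), 0 < p → 0 < μ → 0 < x → 0 < y →
      |sphericalBessel ℓ (p * x) * sphericalBessel ℓ (p * y) -
        sphericalBessel ℓ (Real.sqrt μ * x) * sphericalBessel ℓ (Real.sqrt μ * y)| ≤
      C * |p - Real.sqrt μ| ^ ε * (p ^ (-ε) + μ ^ (-ε / 2)) *
        (|sphericalBessel ℓ (p * x)| ^ (1 - 11 * ε / 5) +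
          |sphericalBessel ℓ (Real.sqrt μ * x)| ^ (1 - 11 * ε / 5)) *
        (|sphericalBessel ℓ (p * y)| ^ (1 - 11 * ε / 5) +
          |sphericalBessel ℓ (Real.sqrt μ * y)| ^ (1 - 11 * ε / 5)) := by
  refine ⟨4, by norm_num, fun ℓ p μ x y hp hμ hx hy => ?_⟩
  have hq : 0 < Real.sqrt μ := Real.sqrt_pos.mpr hμ
  have hqε : Real.sqrt μ ^ (-ε) = μ ^ (-ε / 2) := by
    rw [Real.sqrt_eq_rpow, ← Real.rpow_mul hμ.le]
    ring_nf
  have hα : 0 ≤ 1 - 11 * ε / 5 := by linarith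
  have hαε : 1 - 11 * ε / 5 + ε ≤ 1 := by linarith
  set q := Real.sqrt μ
  set α := 1 - 11 * ε / 5
  have hj : ∀ {r t : ℝ}, 0 < r → 0 < t → |sphericalBessel ℓ (r * t)| ≤ 1 :=
    fun hr ht => abs_sphericalBessel_le_one ℓ (mul_pos hr ht)
  have hdiff : ∀ {t : ℝ}, 0 < t → |sphericalBessel ℓ (p * t) - sphericalBessel ℓ (q * t)| ≤
      (|sphericalBessel ℓ (p * t)| ^ α + |sphericalBessel ℓ (q * t)| ^ α) *
        (2 * |p - q| / min p q) ^ ε := fun ht =>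
    abs_sub_le_rpow_add_rpow_mul_rpow (hj hp ht) (hj hq ht)
      (abs_sphericalBessel_mul_sub_le ℓ hp hq ht) hα hε0.le hαε
  refine (abs_mul_sub_mul_le_of_abs_sub_le (hj hp hx) (hj hq hy) (by linarith)
    (hdiff hx) (hdiff hy)).trans ?_
  rw [← hqε]
  gcongr ?_ * _ * _
  linarith [rpow_two_mul_div_min_le (ε := ε) hp hq (by linarith)]
end

section
/- Fix κ > 0. The improper integral ∫₀^∞ [ (1_{s≤1}((√(1-s)-1)/s + (√(1+s)-1)/s - √(1-s)/(1-s+κ²)) + 1_{s>1}(√(1+s)/s)) - 1_{s>0}√(1+s)/(1+s+κ²) ] ds converges, and the full limiting expression evaluates so that for d → 0⁺, ∫₀¹ (√(1-s)-1)/s + (√(1+s)-1)/s ds + ∫₀¹ 2/√(s²+d²) ds + ∫₁^∞ √(1+s)/s ds - ∫₀^∞ √(1+s)/(1+s+κ²) ds (interpreted with appropriate cutoffs) equals 2 log(1/d) - 4 + log 64 + κπ + o(1). -/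
/-!
Since `(√(1 + s) - 1) / s = 1 / (1 + √(1 + s))`, every integrand is elementary: with `b = √(1 + s)`,
`1 / (1 + b)`, `b / (b ^ 2 + κ ^ 2)` and `b / s` have the primitives `2b - 2 log (1 + b)`,
`2b - 2κ arctan (b / κ)` and `2b + log ((b - 1) / (b + 1))`, and the `√(1 - s)` terms are their
reflections under `s ↦ -s`. The arctan terms at `s = 1` cancel between `(0, 1)` and `(1, ∞)`, the
one at infinity gives `κπ`, and `log (√2 - 1) = -log (1 + √2)` removes the remaining logarithms of
`√2`. Finally `∫₀¹ 2 / √(s² + d²) ds = 2 arsinh (1 / d) = 2 log (1 / d) + 2 log 2 + o(1)`.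
-/

open MeasureTheory Real Set Filter Topology

noncomputable def invOneAddSqrtPrimitive (s : ℝ) : ℝ :=
  2 * √(1 + s) - 2 * log (1 + √(1 + s))

noncomputable def sqrtDivAddSqPrimitive (κ s : ℝ) : ℝ :=
  2 * √(1 + s) - 2 * κ * arctan (√(1 + s) / κ)

noncomputable def sqrtDivPrimitive (s : ℝ) : ℝ :=
  2 * √(1 + s) + log (√(1 + s) - 1) - log (√(1 + s) + 1)

@[fun_prop]
lemma continuous_invOneAddSqrtPrimitive : Continuous invOneAddSqrtPrimitive := by
  unfold invOneAddSqrtPrimitive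
  fun_prop (disch := intro; positivity)

@[fun_prop]
lemma continuous_sqrtDivAddSqPrimitive (κ : ℝ) : Continuous (sqrtDivAddSqPrimitive κ) := by
  unfold sqrtDivAddSqPrimitive
  fun_prop

lemma hasDerivAt_sqrt_one_add {s : ℝ} (hs : -1 < s) :
    HasDerivAt (fun s ↦ √(1 + s)) (1 / (2 * √(1 + s))) s :=
  ((hasDerivAt_id s).const_add 1).sqrt (by simp; linarith)

lemma sqrt_one_add_sub_one_div {s : ℝ} (hs : -1 ≤ s) (hs0 : s ≠ 0) :
    (√(1 + s) - 1) / s = 1 / (1 + √(1 + s)) := by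
  have hsq : √(1 + s) ^ 2 = 1 + s := sq_sqrt (by linarith)
  rw [div_eq_div_iff hs0 (by positivity)]
  linear_combination hsq

lemma hasDerivAt_invOneAddSqrtPrimitive {s : ℝ} (hs : -1 < s) :
    HasDerivAt invOneAddSqrtPrimitive (1 / (1 + √(1 + s))) s := by
  have hb : 0 < √(1 + s) := sqrt_pos.2 (by linarith)
  have h := hasDerivAt_sqrt_one_add hs
  refine ((h.const_mul 2).sub (((h.const_add 1).log (by positivity)).const_mul 2)).congr_deriv ?_
  field_simp
  ring

lemma hasDerivAt_sqrtDivAddSqPrimitive {κ s : ℝ} (hκ : κ ≠ 0) (hs : -1 < s) :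
    HasDerivAt (sqrtDivAddSqPrimitive κ) (√(1 + s) / (1 + s + κ ^ 2)) s := by
  have hb : 0 < √(1 + s) := sqrt_pos.2 (by linarith)
  have hsq : √(1 + s) ^ 2 = 1 + s := sq_sqrt (by linarith)
  have h := hasDerivAt_sqrt_one_add hs
  refine ((h.const_mul 2).sub (((h.div_const κ).arctan).const_mul (2 * κ))).congr_deriv ?_
  rw [show 1 + s + κ ^ 2 = √(1 + s) ^ 2 + κ ^ 2 by rw [hsq]]
  field_simp
  ring

lemma hasDerivAt_sqrtDivPrimitive {s : ℝ} (hs : 0 < s) :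
    HasDerivAt sqrtDivPrimitive (√(1 + s) / s) s := by
  have hsq : √(1 + s) ^ 2 = 1 + s := sq_sqrt (by linarith)
  have hb : 1 < √(1 + s) := by nlinarith [sqrt_nonneg (1 + s)]
  have h := hasDerivAt_sqrt_one_add (by linarith : -1 < s)
  refine (((h.const_mul 2).add ((h.sub_const 1).log (by linarith))).sub
    ((h.add_const 1).log (by linarith))).congr_deriv ?_
  set b := √(1 + s)
  have hb1 : b - 1 ≠ 0 := by linarith
  have hs0 : b ^ 2 - 1 ≠ 0 := by nlinarith
  rw [show s = b ^ 2 - 1 by rw [hsq]; ring]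
  field_simp
  ring

lemma sqrt_one_sub_sub_one_div {s : ℝ} (hs : s ≤ 1) (hs0 : s ≠ 0) :
    (√(1 - s) - 1) / s = -(1 / (1 + √(1 - s))) := by
  have h := sqrt_one_add_sub_one_div (s := -s) (by linarith) (neg_ne_zero.2 hs0)
  rw [← sub_eq_add_neg, div_neg] at h
  rw [← h, neg_neg]

section Bulk

variable {κ : ℝ}

lemma integrableOn_sqrt_sub_one_div_Ioo (hκ : κ ≠ 0) :
    IntegrableOn (fun s : ℝ ↦ (√(1 - s) - 1) / s + (√(1 + s) - 1) / s -
      √(1 - s) / (1 - s + κ ^ 2) - √(1 + s) / (1 + s + κ ^ 2)) (Ioo 0 1) := by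
  have hκ2 : 0 < κ ^ 2 := by positivity
  have hcont : ContinuousOn (fun s : ℝ ↦ -(1 / (1 + √(1 - s))) + 1 / (1 + √(1 + s)) -
      √(1 - s) / (1 - s + κ ^ 2) - √(1 + s) / (1 + s + κ ^ 2)) (Icc 0 1) := by
    refine ContinuousOn.sub (ContinuousOn.sub ?_ ?_) ?_
    · exact (Continuous.continuousOn (by fun_prop (disch := intro; positivity)))
    · exact continuousOn_of_forall_continuousAt fun s hs ↦ by
        fun_prop (disch := (simp only [mem_Icc] at hs; nlinarith))
    · exact continuousOn_of_forall_continuousAt fun s hs ↦ by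
        fun_prop (disch := (simp only [mem_Icc] at hs; nlinarith))
  refine (hcont.integrableOn_Icc.mono_set Ioo_subset_Icc_self).congr_fun
    (fun s ⟨hs0, hs1⟩ ↦ ?_) measurableSet_Ioo
  rw [sqrt_one_sub_sub_one_div hs1.le hs0.ne', sqrt_one_add_sub_one_div (by linarith) hs0.ne']

lemma hasDerivAt_sqrt_sub_one_div_primitive (hκ : κ ≠ 0) {s : ℝ} (hs0 : 0 < s) (hs1 : s < 1) :
    HasDerivAt (fun s ↦ invOneAddSqrtPrimitive s + invOneAddSqrtPrimitive (-s) +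
        sqrtDivAddSqPrimitive κ (-s) - sqrtDivAddSqPrimitive κ s)
      ((√(1 - s) - 1) / s + (√(1 + s) - 1) / s -
        √(1 - s) / (1 - s + κ ^ 2) - √(1 + s) / (1 + s + κ ^ 2)) s := by
  have hneg : -1 < -s := by linarith
  have hG := hasDerivAt_invOneAddSqrtPrimitive (s := s) (by linarith)
  have hGneg := (hasDerivAt_invOneAddSqrtPrimitive hneg).comp s (hasDerivAt_neg s)
  have hH := hasDerivAt_sqrtDivAddSqPrimitive (s := s) hκ (by linarith)
  have hHneg := (hasDerivAt_sqrtDivAddSqPrimitive hκ hneg).comp s (hasDerivAt_neg s)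
  refine (((hG.add hGneg).add hHneg).sub hH).congr_deriv ?_
  rw [sqrt_one_sub_sub_one_div hs1.le hs0.ne', sqrt_one_add_sub_one_div (by linarith) hs0.ne']
  simp only [← sub_eq_add_neg]
  ring

lemma integral_sqrt_sub_one_div_Ioo (hκ : κ ≠ 0) :
    ∫ s in Ioo (0 : ℝ) 1, ((√(1 - s) - 1) / s + (√(1 + s) - 1) / s -
      √(1 - s) / (1 - s + κ ^ 2) - √(1 + s) / (1 + s + κ ^ 2)) =
      2 * κ * arctan (√2 / κ) - 2 * log (1 + √2) - 4 + 4 * log 2 := by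
  rw [← integral_Ioc_eq_integral_Ioo, ← intervalIntegral.integral_of_le zero_le_one,
    intervalIntegral.integral_eq_sub_of_hasDeriv_right_of_le zero_le_one
      (Continuous.continuousOn ?_)
      (fun s hs ↦ (hasDerivAt_sqrt_sub_one_div_primitive hκ hs.1 hs.2).hasDerivWithinAt)
      ((intervalIntegrable_iff_integrableOn_Ioo_of_le zero_le_one).2
        (integrableOn_sqrt_sub_one_div_Ioo hκ))]
  · norm_num [invOneAddSqrtPrimitive, sqrtDivAddSqPrimitive]
    ring
  · fun_prop

end Bulk

lemma tendsto_log_sub_one_sub_log_add_one :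
    Tendsto (fun b : ℝ ↦ log (b - 1) - log (b + 1)) atTop (𝓝 0) := by
  have h := (tendsto_log_comp_add_sub_log (-1)).sub (tendsto_log_comp_add_sub_log 1)
  rw [sub_zero] at h
  refine h.congr fun b ↦ ?_
  simp only [← sub_eq_add_neg]
  ring

lemma log_sqrt_two_sub_one : log (√2 - 1) = -log (1 + √2) := by
  have h : (√2 - 1) * (1 + √2) = 1 := by
    nlinarith [sq_sqrt (zero_le_two : (0 : ℝ) ≤ 2)]
  rw [← log_inv, inv_eq_of_mul_eq_one_left h]

section Tail

variable {κ : ℝ}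

lemma tendsto_sqrtDivPrimitive_sub_sqrtDivAddSqPrimitive (hκ : 0 < κ) :
    Tendsto (fun s ↦ sqrtDivPrimitive s - sqrtDivAddSqPrimitive κ s) atTop (𝓝 (κ * π)) := by
  have hb : Tendsto (fun s : ℝ ↦ √(1 + s)) atTop atTop :=
    tendsto_sqrt_atTop.comp (tendsto_atTop_add_const_left _ 1 tendsto_id)
  have harctan : Tendsto (fun b ↦ 2 * κ * arctan (b / κ)) atTop (𝓝 (2 * κ * (π / 2))) :=
    ((tendsto_nhds_of_tendsto_nhdsWithin tendsto_arctan_atTop).comp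
      (tendsto_id.atTop_div_const hκ)).const_mul _
  have h := (tendsto_log_sub_one_sub_log_add_one.add harctan).comp hb
  rw [zero_add, show 2 * κ * (π / 2) = κ * π by ring] at h
  refine h.congr fun s ↦ ?_
  simp only [Function.comp, sqrtDivPrimitive, sqrtDivAddSqPrimitive]
  ring

lemma sqrt_div_add_sq_le_sqrt_div {s : ℝ} (hs : 0 < s) :
    √(1 + s) / (1 + s + κ ^ 2) ≤ √(1 + s) / s :=
  div_le_div_of_nonneg_left (sqrt_nonneg _) hs (by nlinarith [sq_nonneg κ])

lemma hasDerivAt_sqrt_div_sub_primitive (hκ : κ ≠ 0) {s : ℝ} (hs : 1 ≤ s) :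
    HasDerivAt (fun s ↦ sqrtDivPrimitive s - sqrtDivAddSqPrimitive κ s)
      (√(1 + s) / s - √(1 + s) / (1 + s + κ ^ 2)) s :=
  (hasDerivAt_sqrtDivPrimitive (by linarith)).sub
    (hasDerivAt_sqrtDivAddSqPrimitive hκ (by linarith))

lemma integrableOn_sqrt_div_sub_Ioi (hκ : 0 < κ) :
    IntegrableOn (fun s : ℝ ↦ √(1 + s) / s - √(1 + s) / (1 + s + κ ^ 2)) (Ioi 1) :=
  integrableOn_Ioi_deriv_of_nonneg' (fun _ hs ↦ hasDerivAt_sqrt_div_sub_primitive hκ.ne' hs)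
    (fun _ hs ↦ sub_nonneg.2 (sqrt_div_add_sq_le_sqrt_div (zero_lt_one.trans hs)))
    (tendsto_sqrtDivPrimitive_sub_sqrtDivAddSqPrimitive hκ)

lemma integral_sqrt_div_sub_Ioi (hκ : 0 < κ) :
    ∫ s in Ioi (1 : ℝ), (√(1 + s) / s - √(1 + s) / (1 + s + κ ^ 2)) =
      κ * π + 2 * log (1 + √2) - 2 * κ * arctan (√2 / κ) := by
  rw [integral_Ioi_of_hasDerivAt_of_nonneg'
    (fun _ hs ↦ hasDerivAt_sqrt_div_sub_primitive hκ.ne' hs)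
    (fun _ hs ↦ sub_nonneg.2 (sqrt_div_add_sq_le_sqrt_div (zero_lt_one.trans hs)))
    (tendsto_sqrtDivPrimitive_sub_sqrtDivAddSqPrimitive hκ)]
  norm_num [sqrtDivPrimitive, sqrtDivAddSqPrimitive, log_sqrt_two_sub_one, add_comm _ (1 : ℝ)]
  ring

end Tail

lemma hasDerivAt_arsinh_div {d : ℝ} (hd : 0 < d) (s : ℝ) :
    HasDerivAt (fun s ↦ arsinh (s / d)) (1 / √(s ^ 2 + d ^ 2)) s := by
  refine ((hasDerivAt_id s).div_const d).arsinh.congr_deriv ?_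
  have h : √(s ^ 2 + d ^ 2) = d * √(1 + (s / d) ^ 2) := by
    rw [← sqrt_sq hd.le, ← sqrt_mul (sq_nonneg d), sqrt_sq hd.le]
    congr 1
    field_simp
    ring
  rw [h, id, smul_eq_mul]
  ring

lemma integral_Ioo_two_div_sqrt_sq_add_sq {d : ℝ} (hd : 0 < d) :
    ∫ s in Ioo (0 : ℝ) 1, 2 / √(s ^ 2 + d ^ 2) = 2 * arsinh (1 / d) := by
  rw [← integral_Ioc_eq_integral_Ioo, ← intervalIntegral.integral_of_le zero_le_one]
  simp_rw [div_eq_mul_one_div (2 : ℝ)]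
  rw [intervalIntegral.integral_const_mul, intervalIntegral.integral_eq_sub_of_hasDerivAt
    (fun s _ ↦ hasDerivAt_arsinh_div hd s)
    (Continuous.intervalIntegrable (by fun_prop (disch := intro; positivity)) _ _)]
  simp

lemma arsinh_one_div {d : ℝ} (hd : 0 < d) : arsinh (1 / d) = log (1 + √(1 + d ^ 2)) - log d := by
  have h : √(1 + (1 / d) ^ 2) = √(1 + d ^ 2) / d := by
    rw [eq_div_iff hd.ne', ← sqrt_sq hd.le, ← sqrt_mul (by positivity), sqrt_sq hd.le]
    congr 1
    field_simp
    ring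
  rw [arsinh, h, ← add_div, log_div (by positivity) hd.ne']

lemma tendsto_arsinh_one_div_sub_log :
    Tendsto (fun d ↦ arsinh (1 / d) - log (1 / d)) (𝓝[>] 0) (𝓝 (log 2)) := by
  have h : ContinuousAt (fun d : ℝ ↦ log (1 + √(1 + d ^ 2))) 0 := by
    fun_prop (disch := positivity)
  have h0 : log (1 + √(1 + (0 : ℝ) ^ 2)) = log 2 := by norm_num
  rw [← h0]
  refine (h.tendsto.mono_left nhdsWithin_le_nhds).congr' ?_
  filter_upwards [self_mem_nhdsWithin] with d hd
  rw [arsinh_one_div hd, one_div, log_inv]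
  ring

/-- For fixed `κ > 0`, the integrands appearing in the asymptotic evaluation of
`m_μ^{(κ)}(Δ)` are integrable, and as `d → 0⁺`,
`∫₀¹ ((√(1-s)-1)/s + (√(1+s)-1)/s - √(1-s)/(1-s+κ²) - √(1+s)/(1+s+κ²)) ds
  + ∫₀¹ 2/√(s²+d²) ds + ∫₁^∞ (√(1+s)/s - √(1+s)/(1+s+κ²)) ds
  = 2 log(1/d) - 4 + log 64 + κπ + o(1)`. -/
theorem mMu_integral_asymptotics (κ : ℝ) (hκ : 0 < κ) :
    IntegrableOn (fun s : ℝ =>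
        (Real.sqrt (1 - s) - 1) / s + (Real.sqrt (1 + s) - 1) / s -
          Real.sqrt (1 - s) / (1 - s + κ ^ 2) - Real.sqrt (1 + s) / (1 + s + κ ^ 2))
      (Set.Ioo 0 1) volume ∧
    IntegrableOn (fun s : ℝ =>
        Real.sqrt (1 + s) / s - Real.sqrt (1 + s) / (1 + s + κ ^ 2)) (Set.Ioi 1) volume ∧
    Filter.Tendsto (fun d : ℝ =>
        ((∫ s in Set.Ioo (0 : ℝ) 1,
            ((Real.sqrt (1 - s) - 1) / s + (Real.sqrt (1 + s) - 1) / s -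
              Real.sqrt (1 - s) / (1 - s + κ ^ 2) - Real.sqrt (1 + s) / (1 + s + κ ^ 2))) +
          (∫ s in Set.Ioo (0 : ℝ) 1, 2 / Real.sqrt (s ^ 2 + d ^ 2)) +
          (∫ s in Set.Ioi (1 : ℝ),
            (Real.sqrt (1 + s) / s - Real.sqrt (1 + s) / (1 + s + κ ^ 2)))) -
          (2 * Real.log (1 / d) - 4 + Real.log 64 + κ * Real.pi))
      (nhdsWithin 0 (Set.Ioi 0)) (nhds 0) := by
  refine ⟨integrableOn_sqrt_sub_one_div_Ioo hκ.ne', integrableOn_sqrt_div_sub_Ioi hκ, ?_⟩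
  have hlim := (tendsto_arsinh_one_div_sub_log.const_mul 2).sub_const (2 * log 2)
  rw [sub_self] at hlim
  refine hlim.congr' ?_
  filter_upwards [self_mem_nhdsWithin] with d hd
  have hlog64 : log 64 = 6 * log 2 := by
    rw [show (64 : ℝ) = 2 ^ 6 by norm_num, log_pow]
    norm_num
  rw [integral_sqrt_sub_one_div_Ioo hκ.ne', integral_sqrt_div_sub_Ioi hκ,
    integral_Ioo_two_div_sqrt_sq_add_sq hd, hlog64]
  ring
end

section
/- Let x : [0,ρ] → [0,∞) with x(0) > 0 satisfy x(s) ≤ M x(0) for all s ∈ [0,ρ] and |x(s) - x(0)| ≤ L s. Then ∫₀^ρ |x(s)² - x(0)²| / ( √(s²+x(s)²) √(s²+x(0)²) (√(s²+x(s)²) + √(s²+x(0)²)) ) ds ≤ C L M, with C an absolute constant, using that ∫₀^∞ x(0) / ( √(x(0)²+s²) ( s + √(x(0)²+s²) ) ) ds is bounded uniformly in x(0). -/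
open MeasureTheory Real Set

/-- There is an absolute constant `C > 0` such that: if `x : [0,ρ] → [0,∞)` with `x(0) > 0`
satisfies `x(s) ≤ M x(0)` and `|x(s) - x(0)| ≤ L s` on `[0,ρ]`, then
`∫₀^ρ |x(s)²-x(0)²| / (√(s²+x(s)²)√(s²+x(0)²)(√(s²+x(s)²)+√(s²+x(0)²))) ds ≤ C L M`. -/
theorem frozen_gap_head_integral_bound :
    ∃ C > (0 : ℝ), ∀ (x : ℝ → ℝ) (L M ρ : ℝ), 0 < L → 0 < M → 0 < ρ →
      0 < x 0 →
      (∀ s ∈ Set.Icc (0 : ℝ) ρ, 0 ≤ x s) →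
      (∀ s ∈ Set.Icc (0 : ℝ) ρ, x s ≤ M * x 0) →
      (∀ s ∈ Set.Icc (0 : ℝ) ρ, |x s - x 0| ≤ L * s) →
      (∫ s in (0 : ℝ)..ρ, |x s ^ 2 - x 0 ^ 2| /
          (Real.sqrt (s ^ 2 + x s ^ 2) * Real.sqrt (s ^ 2 + x 0 ^ 2) *
            (Real.sqrt (s ^ 2 + x s ^ 2) + Real.sqrt (s ^ 2 + x 0 ^ 2)))) ≤
        C * L * M := by
  refine ⟨Real.pi, Real.pi_pos, ?_⟩
  intro x L M ρ hL hM hρ hx0 hxnn hxM hxLip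
  have hM1 : 1 ≤ M := by
    have h := hxM 0 ⟨le_refl 0, hρ.le⟩
    nlinarith
  have hRHS : 0 < Real.pi * L * M := by positivity
  -- pointwise bound
  have hptwise : ∀ s ∈ Set.Icc (0 : ℝ) ρ,
      |x s ^ 2 - x 0 ^ 2| /
          (Real.sqrt (s ^ 2 + x s ^ 2) * Real.sqrt (s ^ 2 + x 0 ^ 2) *
            (Real.sqrt (s ^ 2 + x s ^ 2) + Real.sqrt (s ^ 2 + x 0 ^ 2))) ≤
        L * (1 + M) * x 0 * (1 / (s ^ 2 + x 0 ^ 2)) := by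
    intro s hs
    obtain ⟨hs0, hsρ⟩ := hs
    have hgnn : 0 ≤ L * (1 + M) * x 0 * (1 / (s ^ 2 + x 0 ^ 2)) := by positivity
    rcases eq_or_lt_of_le hs0 with h | h
    · rw [← h, sub_self, abs_zero, zero_div]
      simpa [← h] using hgnn
    · have hxs0 : 0 ≤ x s := hxnn s ⟨hs0, hsρ⟩
      have hA : s ≤ Real.sqrt (s ^ 2 + x s ^ 2) := by
        calc s = Real.sqrt (s ^ 2) := (Real.sqrt_sq hs0).symm
          _ ≤ Real.sqrt (s ^ 2 + x s ^ 2) :=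
            Real.sqrt_le_sqrt (le_add_of_nonneg_right (sq_nonneg _))
      have hApos : 0 < Real.sqrt (s ^ 2 + x s ^ 2) := lt_of_lt_of_le h hA
      have hBpos : 0 < Real.sqrt (s ^ 2 + x 0 ^ 2) := Real.sqrt_pos.mpr (by positivity)
      have hB2 : Real.sqrt (s ^ 2 + x 0 ^ 2) * Real.sqrt (s ^ 2 + x 0 ^ 2) = s ^ 2 + x 0 ^ 2 :=
        Real.mul_self_sqrt (by positivity)
      have hnum : |x s ^ 2 - x 0 ^ 2| ≤ L * s * ((1 + M) * x 0) := by
        have h1 : |x s ^ 2 - x 0 ^ 2| = |x s - x 0| * (x s + x 0) := by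
          have : x s ^ 2 - x 0 ^ 2 = (x s - x 0) * (x s + x 0) := by ring
          rw [this, abs_mul, abs_of_nonneg (show (0:ℝ) ≤ x s + x 0 by linarith)]
        rw [h1]
        have h2 := hxLip s ⟨hs0, hsρ⟩
        have h3 := hxM s ⟨hs0, hsρ⟩
        have h4 : x s + x 0 ≤ (1 + M) * x 0 := by nlinarith
        exact mul_le_mul h2 h4 (by positivity) (by positivity)
      have hden : s * Real.sqrt (s ^ 2 + x 0 ^ 2) *
          (s + Real.sqrt (s ^ 2 + x 0 ^ 2)) ≤
            Real.sqrt (s ^ 2 + x s ^ 2) * Real.sqrt (s ^ 2 + x 0 ^ 2) *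
              (Real.sqrt (s ^ 2 + x s ^ 2) + Real.sqrt (s ^ 2 + x 0 ^ 2)) := by
        have := hBpos.le
        gcongr
      have hdenpos : 0 < s * Real.sqrt (s ^ 2 + x 0 ^ 2) *
          (s + Real.sqrt (s ^ 2 + x 0 ^ 2)) := by positivity
      calc |x s ^ 2 - x 0 ^ 2| /
            (Real.sqrt (s ^ 2 + x s ^ 2) * Real.sqrt (s ^ 2 + x 0 ^ 2) *
              (Real.sqrt (s ^ 2 + x s ^ 2) + Real.sqrt (s ^ 2 + x 0 ^ 2)))
          ≤ (L * s * ((1 + M) * x 0)) /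
            (s * Real.sqrt (s ^ 2 + x 0 ^ 2) * (s + Real.sqrt (s ^ 2 + x 0 ^ 2))) :=
          div_le_div₀ (by positivity) hnum hdenpos hden
        _ = L * (1 + M) * x 0 *
            (1 / (Real.sqrt (s ^ 2 + x 0 ^ 2) * (s + Real.sqrt (s ^ 2 + x 0 ^ 2)))) := by
          have hs' : s ≠ 0 := ne_of_gt h
          have hB' : Real.sqrt (s ^ 2 + x 0 ^ 2) ≠ 0 := ne_of_gt hBpos
          have hsB : s + Real.sqrt (s ^ 2 + x 0 ^ 2) ≠ 0 := by positivity
          field_simp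
        _ ≤ L * (1 + M) * x 0 * (1 / (s ^ 2 + x 0 ^ 2)) := by
          have hle : s ^ 2 + x 0 ^ 2 ≤
              Real.sqrt (s ^ 2 + x 0 ^ 2) * (s + Real.sqrt (s ^ 2 + x 0 ^ 2)) := by
            nlinarith [hB2, hBpos.le, hs0]
          gcongr
  -- integrability and value of the majorant
  have hcg : Continuous fun s : ℝ => L * (1 + M) * x 0 * (1 / (s ^ 2 + x 0 ^ 2)) := by
    apply continuous_const.mul
    exact Continuous.div continuous_const (by continuity) fun s => by positivity
  have hgint : IntervalIntegrable (fun s : ℝ => L * (1 + M) * x 0 * (1 / (s ^ 2 + x 0 ^ 2)))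
      volume 0 ρ := hcg.intervalIntegrable _ _
  have hx0' : x 0 ≠ 0 := ne_of_gt hx0
  have key : (∫ s in (0 : ℝ)..ρ, (1 : ℝ) / (1 + (s / x 0) ^ 2)) =
      x 0 * Real.arctan (ρ / x 0) := by
    rw [intervalIntegral.integral_comp_div (f := fun t : ℝ => (1 : ℝ) / (1 + t ^ 2)) hx0',
      integral_one_div_one_add_sq]
    simp [smul_eq_mul]
  have hint : (∫ s in (0 : ℝ)..ρ, (1 : ℝ) / (s ^ 2 + x 0 ^ 2)) =
      (1 / x 0) * Real.arctan (ρ / x 0) := by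
    have hcong : Set.EqOn (fun s : ℝ => (1 : ℝ) / (s ^ 2 + x 0 ^ 2))
        (fun s : ℝ => (1 / (x 0) ^ 2) * (1 / (1 + (s / x 0) ^ 2))) (Set.uIcc 0 ρ) := by
      intro s _
      have hden : (0:ℝ) < s ^ 2 + x 0 ^ 2 := by positivity
      field_simp
      ring
    rw [intervalIntegral.integral_congr hcong, intervalIntegral.integral_const_mul, key]
    field_simp
  have hgval : (∫ s in (0 : ℝ)..ρ, L * (1 + M) * x 0 * (1 / (s ^ 2 + x 0 ^ 2))) =
      L * (1 + M) * Real.arctan (ρ / x 0) := by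
    rw [intervalIntegral.integral_const_mul, hint]
    field_simp
  have harctan1 : Real.arctan (ρ / x 0) ≤ Real.pi / 2 := (Real.arctan_lt_pi_div_two _).le
  have harctan0 : 0 ≤ Real.arctan (ρ / x 0) := by
    simpa using (Real.arctan_strictMono.monotone (show (0:ℝ) ≤ ρ / x 0 by positivity))
  by_cases hfi : IntervalIntegrable (fun s : ℝ => |x s ^ 2 - x 0 ^ 2| /
      (Real.sqrt (s ^ 2 + x s ^ 2) * Real.sqrt (s ^ 2 + x 0 ^ 2) *
        (Real.sqrt (s ^ 2 + x s ^ 2) + Real.sqrt (s ^ 2 + x 0 ^ 2)))) volume 0 ρ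
  · calc (∫ s in (0 : ℝ)..ρ, |x s ^ 2 - x 0 ^ 2| /
          (Real.sqrt (s ^ 2 + x s ^ 2) * Real.sqrt (s ^ 2 + x 0 ^ 2) *
            (Real.sqrt (s ^ 2 + x s ^ 2) + Real.sqrt (s ^ 2 + x 0 ^ 2))))
        ≤ ∫ s in (0 : ℝ)..ρ, L * (1 + M) * x 0 * (1 / (s ^ 2 + x 0 ^ 2)) :=
        intervalIntegral.integral_mono_on hρ.le hfi hgint hptwise
      _ = L * (1 + M) * Real.arctan (ρ / x 0) := hgval
      _ ≤ Real.pi * L * M := by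
        have e1 : L * (1 + M) * Real.arctan (ρ / x 0) ≤ L * (1 + M) * (Real.pi / 2) := by
          have : (0:ℝ) ≤ L * (1 + M) := by positivity
          exact mul_le_mul_of_nonneg_left harctan1 this
        nlinarith [Real.pi_pos]
  · rw [intervalIntegral.integral_undef hfi]
    exact hRHS.le
end

section
/- Let Δ : ℝ³ → [0,∞) be radial and Lipschitz in the radial variable with |Δ(p) - Δ(q)| ≤ L ||p| - |q|| where L ≤ C μ^{1/2 - δ} for some δ > 0, and let Ξ = inf_p √((p²-μ)² + Δ(p)²). Then for any p with |p²-μ| ≤ Δ(√μ) one has |Δ(p) - Δ(√μ)| ≤ C μ^{-δ} Δ(√μ), and consequently Ξ = Δ(√μ)(1 + o(1)) as μ → ∞. -/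
open MeasureTheory Real Filter

/-!
On the shell `||p|² - μ| ≤ Δ(√μ)` one has `||p| - √μ| = ||p|² - μ| / (|p| + √μ) ≤ Δ(√μ) / √μ`,
so the radial Lipschitz bound `L ≤ C μ^{1/2-δ}` gives `|Δ(p) - Δ(√μ)| ≤ C μ^{-δ} Δ(√μ)`.
Hence `√((|p|²-μ)² + Δ(p)²)` is at least `(1 - C μ^{-δ}) Δ(√μ)` on the shell (from its second term)
and at least `Δ(√μ)` off it (from its first term), while at `|p| = √μ` it equals `Δ(√μ)`.
-/

lemma abs_sub_le_abs_sq_sub_div {a s : ℝ} (ha : 0 ≤ a) (hs : 0 < s) :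
    |a - s| ≤ |a ^ 2 - s ^ 2| / s := by
  rw [le_div_iff₀ hs, show a ^ 2 - s ^ 2 = (a - s) * (a + s) by ring, abs_mul]
  gcongr
  rw [abs_of_pos (by positivity)]
  linarith

lemma rpow_half_sub_div_sqrt {μ : ℝ} (hμ : 0 < μ) (δ : ℝ) :
    μ ^ ((1 : ℝ) / 2 - δ) / √μ = μ ^ (-δ) := by
  rw [sqrt_eq_rpow, ← rpow_sub hμ]
  ring_nf

lemma abs_sub_le_of_abs_norm_sq_sub_le {E : Type*} [SeminormedAddCommGroup E] {f : E → ℝ}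
    {K μ : ℝ} {p q : E} (hK : 0 ≤ K) (hμ : 0 < μ) (hq : ‖q‖ = √μ)
    (hf : |f p - f q| ≤ K * |‖p‖ - ‖q‖|) (hp : |‖p‖ ^ 2 - μ| ≤ f q) :
    |f p - f q| ≤ K / √μ * f q := by
  have hs : 0 < √μ := sqrt_pos.2 hμ
  calc |f p - f q| ≤ K * |‖p‖ - √μ| := hq ▸ hf
    _ ≤ K * (|‖p‖ ^ 2 - √μ ^ 2| / √μ) := by
        gcongr; exact abs_sub_le_abs_sq_sub_div (norm_nonneg p) hs
    _ ≤ K * (f q / √μ) := by rw [sq_sqrt hμ.le]; gcongr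
    _ = K / √μ * f q := by ring

lemma le_ciInf_sqrt_sq_add_sq {ι : Type*} [Nonempty ι] {a b : ι → ℝ} {D ε : ℝ} (hD : 0 ≤ D)
    (hε : 0 ≤ ε) (hb : ∀ i, |a i| ≤ D → (1 - ε) * D ≤ b i) :
    (1 - ε) * D ≤ ⨅ i, √(a i ^ 2 + b i ^ 2) := by
  refine le_ciInf fun i => ?_
  rcases le_or_gt |a i| D with hi | hi
  · calc (1 - ε) * D ≤ b i := hb i hi
      _ ≤ |b i| := le_abs_self _
      _ ≤ √(a i ^ 2 + b i ^ 2) := abs_le_sqrt (by nlinarith)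
  · calc (1 - ε) * D ≤ D := by nlinarith
      _ ≤ |a i| := hi.le
      _ ≤ √(a i ^ 2 + b i ^ 2) := abs_le_sqrt (by nlinarith)

lemma ciInf_sqrt_sq_add_sq_le {ι : Type*} {a b : ι → ℝ} {i : ι} (hi : a i = 0) :
    ⨅ j, √(a j ^ 2 + b j ^ 2) ≤ |b i| := by
  have hbdd : BddBelow (Set.range fun j => √(a j ^ 2 + b j ^ 2)) :=
    ⟨0, by rintro _ ⟨j, rfl⟩; exact sqrt_nonneg _⟩
  simpa [hi, sqrt_sq_eq_abs] using ciInf_le hbdd i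

/-- Let `Δ = Δ_μ : ℝ³ → (0,∞)` be radial and Lipschitz in the radial variable with constant
`L ≤ C μ^{1/2-δ}`, `δ > 0`, and let `Ξ_μ = inf_p √((|p|²-μ)² + Δ_μ(p)²)`. Then there is
`C' > 0` such that for `μ ≥ 1` and any `p` with `||p|²-μ| ≤ Δ_μ(√μ)` one has
`|Δ_μ(p) - Δ_μ(√μ)| ≤ C' μ^{-δ} Δ_μ(√μ)`, and consequently `Ξ_μ = Δ_μ(√μ)(1 + o(1))`
as `μ → ∞`. -/
theorem energyGap_eq_gap_at_fermi (Δ : ℝ → EuclideanSpace ℝ (Fin 3) → ℝ)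
    (C δ : ℝ) (hC : 0 < C) (hδ : 0 < δ)
    (hpos : ∀ μ p, 0 < Δ μ p)
    (hlip : ∀ μ : ℝ, 1 ≤ μ → ∀ p q : EuclideanSpace ℝ (Fin 3),
      |Δ μ p - Δ μ q| ≤ C * μ ^ ((1 : ℝ) / 2 - δ) * |‖p‖ - ‖q‖|) :
    (∃ C' > (0 : ℝ), ∀ μ : ℝ, 1 ≤ μ → ∀ p : EuclideanSpace ℝ (Fin 3),
      |‖p‖ ^ 2 - μ| ≤ Δ μ (Real.sqrt μ • (EuclideanSpace.single 0 1)) →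
      |Δ μ p - Δ μ (Real.sqrt μ • (EuclideanSpace.single 0 1))| ≤
        C' * μ ^ (-δ) * Δ μ (Real.sqrt μ • (EuclideanSpace.single 0 1))) ∧
    Filter.Tendsto (fun μ : ℝ =>
        (⨅ p : EuclideanSpace ℝ (Fin 3),
          Real.sqrt ((‖p‖ ^ 2 - μ) ^ 2 + Δ μ p ^ 2)) /
          Δ μ (Real.sqrt μ • (EuclideanSpace.single 0 1)))
      Filter.atTop (nhds 1) := by
  have hnorm : ∀ μ, ‖√μ • EuclideanSpace.single (0 : Fin 3) (1 : ℝ)‖ = √μ := fun μ => by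
    simp [norm_smul]
  have hest : ∀ μ : ℝ, 1 ≤ μ → ∀ p : EuclideanSpace ℝ (Fin 3),
      |‖p‖ ^ 2 - μ| ≤ Δ μ (√μ • EuclideanSpace.single 0 1) →
      |Δ μ p - Δ μ (√μ • EuclideanSpace.single 0 1)| ≤
        C * μ ^ (-δ) * Δ μ (√μ • EuclideanSpace.single 0 1) := fun μ hμ p hp => by
    have hμ0 : 0 < μ := one_pos.trans_le hμ
    have := abs_sub_le_of_abs_norm_sq_sub_le (by positivity) hμ0 (hnorm μ) (hlip μ hμ p _) hp
    rwa [mul_div_assoc, rpow_half_sub_div_sqrt hμ0] at this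
  refine ⟨⟨C, hC, hest⟩, ?_⟩
  have hlower : Tendsto (fun μ : ℝ => 1 - C * μ ^ (-δ)) atTop (nhds 1) := by
    simpa using tendsto_const_nhds.sub ((tendsto_rpow_neg_atTop hδ).const_mul C)
  refine tendsto_of_tendsto_of_tendsto_of_le_of_le' hlower tendsto_const_nhds ?_ ?_
  · filter_upwards [eventually_ge_atTop 1] with μ hμ
    rw [le_div_iff₀ (hpos _ _)]
    refine le_ciInf_sqrt_sq_add_sq (hpos _ _).le (by positivity) fun p hp => ?_
    linarith [(abs_le.1 (hest μ hμ p hp)).1]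
  · filter_upwards [eventually_ge_atTop 0] with μ hμ
    rw [div_le_one (hpos _ _), ← abs_of_pos (hpos μ (√μ • EuclideanSpace.single 0 1))]
    exact ciInf_sqrt_sq_add_sq_le (by rw [hnorm, sq_sqrt hμ, sub_self])
end
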